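/- Let n ≥ 2 and let A be an n×n real matrix with nonnegative entries and a_{11} = 0, whose eigenvalues (roots of the characteristic polynomial, with multiplicity) are 1 with multiplicity one and a real number λ with multiplicity n − 1. Then λ ≤ (n − 2)/(2(n − 1)). -/

import Mathlib

open Matrix Polynomial

/-- The eigenvalues of a real square matrix: the multiset of roots (with multiplicity)
of its characteristic polynomial over `ℂ`. -/
noncomputable def eigs {n : ℕ} (A : Matrix (Fin n) (Fin n) ℝ) : Multiset ℂ :=
  ((A.map Complex.ofReal).charpoly).roots

/-- The spectral radius: the maximum of `|λ|` over the eigenvalues `λ`. -/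
noncomputable def specRad {n : ℕ} (A : Matrix (Fin n) (Fin n) ℝ) : ℝ :=
  sSup {r : ℝ | ∃ μ ∈ eigs A, r = ‖μ‖}

/-- The spread: the maximum of `|λ - μ|` over pairs of eigenvalues `λ, μ`. -/
noncomputable def spread {n : ℕ} (A : Matrix (Fin n) (Fin n) ℝ) : ℝ :=
  sSup {r : ℝ | ∃ μ ∈ eigs A, ∃ ν ∈ eigs A, r = ‖μ - ν‖}

/-! The eigenvalues of `A ^ 2` are the squares of those of `A`, so `tr A = 1 + (n - 1) λ` and
`tr A² = 1 + (n - 1) λ²`. Nonnegativity of the entries gives `tr A² = ∑ᵢⱼ aᵢⱼ aⱼᵢ ≥ ∑ᵢ aᵢᵢ²`, and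
since `a₁₁ = 0` Cauchy–Schwarz on the other `n - 1` diagonal entries gives
`(tr A)² ≤ (n - 1) ∑ᵢ aᵢᵢ²`. Hence `(1 + (n - 1) λ)² ≤ (n - 1) (1 + (n - 1) λ²)`, which reduces to
`2 (n - 1) λ ≤ n - 2`. -/

theorem Multiset.prod_map_sq_sub_sq {R : Type*} [CommRing R] (m : Multiset R) (s : R) :
    (m.map fun x => s ^ 2 - x ^ 2).prod =
      (-1) ^ Multiset.card m * ((m.map fun x => -s - x).prod * (m.map fun x => s - x).prod) := by
  induction m using Multiset.induction_on with
  | empty => simp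
  | cons a m ih =>
    simp only [Multiset.map_cons, Multiset.prod_cons, Multiset.card_cons, ih]
    ring

open Finset in
theorem sq_sum_le_card_sub_one_mul_sum_sq {ι R : Type*} [Fintype ι] [DecidableEq ι] [Ring R]
    [LinearOrder R] [IsStrictOrderedRing R] (f : ι → R) {i₀ : ι} (h : f i₀ = 0) :
    (∑ i, f i) ^ 2 ≤ (Fintype.card ι - 1 : R) * ∑ i, f i ^ 2 := by
  have hcard : (#(univ.erase i₀) : R) = Fintype.card ι - 1 := by
    rw [card_erase_of_mem (mem_univ i₀), card_univ, Nat.cast_pred (Fintype.card_pos_iff.2 ⟨i₀⟩)]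
  rw [← add_sum_erase _ _ (mem_univ i₀), ← add_sum_erase _ (f · ^ 2) (mem_univ i₀), h,
    zero_pow two_ne_zero, zero_add, zero_add, ← hcard]
  exact sq_sum_le_card_mul_sum_sq

namespace Matrix

variable {ι : Type*} [Fintype ι] [DecidableEq ι]

theorem roots_charpoly_sq {K : Type*} [Field K] [IsAlgClosed K] (M : Matrix ι ι K) :
    (M ^ 2).charpoly.roots = M.charpoly.roots.map (· ^ 2) := by
  suffices (M ^ 2).charpoly = ((M.charpoly.roots.map (· ^ 2)).map (X - C ·)).prod by
    rw [this, roots_multiset_prod_X_sub_C]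
  have hcard : Multiset.card M.charpoly.roots = Fintype.card ι := by
    rw [IsAlgClosed.card_roots_eq_natDegree, charpoly_natDegree_eq_dim]
  -- every point is a square `s ^ 2`, where `s² - M² = -(-s - M)(s - M)` factors the determinant
  refine Polynomial.funext fun r => ?_
  obtain ⟨s, rfl⟩ := IsAlgClosed.exists_pow_nat_eq r two_pos
  have hfactor : scalar ι (s ^ 2) - M ^ 2 = -((scalar ι (-s) - M) * (scalar ι s - M)) := by
    rw [map_neg, map_pow, (scalar_commute s (Commute.all s) M).sq_sub_sq, ← neg_add', neg_mul,
      neg_neg]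
  rw [eval_charpoly, hfactor, det_neg, det_mul, ← eval_charpoly, ← eval_charpoly,
    (IsAlgClosed.splits M.charpoly).eq_prod_roots_of_monic M.charpoly_monic, ← hcard]
  simp only [eval_multiset_prod, Multiset.map_map, Function.comp_def, eval_sub, eval_X, eval_C,
    roots_multiset_prod_X_sub_C, Multiset.prod_map_sq_sub_sq]

theorem trace_sq_eq_sum_sq_roots_charpoly {K : Type*} [Field K] [IsAlgClosed K]
    (M : Matrix ι ι K) : (M ^ 2).trace = (M.charpoly.roots.map (· ^ 2)).sum := by
  rw [trace_eq_sum_roots_charpoly, roots_charpoly_sq]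

variable {R : Type*}

theorem sum_diag_sq_le_trace_sq [Semiring R] [PartialOrder R] [IsOrderedRing R]
    {A : Matrix ι ι R} (hA : ∀ i j, 0 ≤ A i j) : ∑ i, A i i ^ 2 ≤ (A ^ 2).trace := by
  simp only [trace, diag, sq, mul_apply]
  exact Finset.sum_le_sum fun i _ => Finset.single_le_sum (f := fun j => A i j * A j i)
    (fun j _ => mul_nonneg (hA i j) (hA j i)) (Finset.mem_univ i)

theorem sq_trace_le_card_sub_one_mul_trace_sq [Ring R] [LinearOrder R] [IsStrictOrderedRing R]
    {A : Matrix ι ι R} (hA : ∀ i j, 0 ≤ A i j) {i₀ : ι} (h : A i₀ i₀ = 0) :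
    A.trace ^ 2 ≤ (Fintype.card ι - 1 : R) * (A ^ 2).trace := by
  have hcard : (1 : R) ≤ Fintype.card ι := Nat.one_le_cast.2 (Fintype.card_pos_iff.2 ⟨i₀⟩)
  calc A.trace ^ 2 ≤ (Fintype.card ι - 1 : R) * ∑ i, A i i ^ 2 :=
        sq_sum_le_card_sub_one_mul_sum_sq A.diag h
    _ ≤ (Fintype.card ι - 1 : R) * (A ^ 2).trace :=
        mul_le_mul_of_nonneg_left (sum_diag_sq_le_trace_sq hA) (sub_nonneg.2 hcard)

end Matrix

theorem trace_eq_sum_eigs {n : ℕ} (A : Matrix (Fin n) (Fin n) ℝ) :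
    (A.trace : ℂ) = (eigs A).sum := by
  rw [eigs, ← trace_eq_sum_roots_charpoly]
  exact AddMonoidHom.map_trace Complex.ofRealHom A

theorem trace_sq_eq_sum_sq_eigs {n : ℕ} (A : Matrix (Fin n) (Fin n) ℝ) :
    ((A ^ 2).trace : ℂ) = ((eigs A).map (· ^ 2)).sum := by
  rw [eigs, ← trace_sq_eq_sum_sq_roots_charpoly]
  exact (AddMonoidHom.map_trace Complex.ofRealHom (A ^ 2)).trans
    (congrArg trace (map_pow Complex.ofRealHom.mapMatrix A 2))

theorem eigenvalue_le_of_two_point_spectrum (n : ℕ) (hn : 2 ≤ n)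
    (A : Matrix (Fin n) (Fin n) ℝ)
    (hA : ∀ i j, 0 ≤ A i j)
    (h11 : A ⟨0, by omega⟩ ⟨0, by omega⟩ = 0)
    (lam : ℝ)
    (heig : eigs A = (1 : ℂ) ::ₘ Multiset.replicate (n - 1) (lam : ℂ)) :
    lam ≤ ((n : ℝ) - 2) / (2 * ((n : ℝ) - 1)) := by
  have hcast : ((n - 1 : ℕ) : ℂ) = n - 1 := by rw [Nat.cast_sub (by omega), Nat.cast_one]
  have htrace : A.trace = 1 + (n - 1) * lam := by
    have h := trace_eq_sum_eigs A
    simp only [heig, Multiset.sum_cons, Multiset.sum_replicate, nsmul_eq_mul, hcast] at h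
    exact_mod_cast h
  have htrace_sq : (A ^ 2).trace = 1 + (n - 1) * lam ^ 2 := by
    have h := trace_sq_eq_sum_sq_eigs A
    simp only [heig, Multiset.map_cons, Multiset.map_replicate, Multiset.sum_cons,
      Multiset.sum_replicate, nsmul_eq_mul, one_pow, hcast] at h
    exact_mod_cast h
  have key := sq_trace_le_card_sub_one_mul_trace_sq hA h11
  rw [Fintype.card_fin, htrace, htrace_sq] at key
  have hn1 : (1 : ℝ) < n := by exact_mod_cast hn
  rw [le_div_iff₀ (by linarith)]
  nlinarith [key]
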